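/- arXiv:1706.05940 — 2 statements merged into one kernel-verified Lean document; each statement's English description precedes it below -/
import Mathlib

section
/- For every S ∈ 𝒮_𝒢, one has Γ S = S Γ and Γ S Γ = Γ S. -/
/-!
`Γ` is symmetric, and right multiplication by `Γ` replaces each entry of a row by its average
over the block of the column, so it fixes every matrix whose rows are constant on blocks.
For `S ∈ 𝒮_𝒢` the block sums `∑_{t ∈ ℬ(r)} S_{ts}` depend only on the block of `s`: a
permutation of `{1,…,d}` preserving the clusters and carrying `s` to `s'` permutes every block
and preserves the entries of `S`. Hence the rows of `Γ S` are block-constant and `Γ S Γ = Γ S`;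
transposing, `S Γ = (Γ S)ᵀ = (Γ S Γ)ᵀ = Γ S Γ = Γ S`.
-/

open Matrix Finset

abbrev PairIdx (d : ℕ) := {p : Fin d × Fin d // p.1 < p.2}

/-- Pairs `r` and `s` lie in the same block: the unordered pairs of cluster labels coincide. -/
def sameBlock {d K : ℕ} (g : Fin d → Fin K) (r s : PairIdx d) : Prop :=
  (g r.1.1 = g s.1.1 ∧ g r.1.2 = g s.1.2) ∨ (g r.1.1 = g s.1.2 ∧ g r.1.2 = g s.1.1)

instance {d K : ℕ} (g : Fin d → Fin K) : DecidableRel (sameBlock g) :=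
  fun r s => by unfold sameBlock; infer_instance

/-- The overlap type `φ̄(r,s)`: the multiset of cluster labels of the elements of
`{i_r, j_r} ∩ {i_s, j_s}`.  The empty multiset encodes the type `(0,0)`, the singleton
`{k}` encodes `(0,k)`, and the two-element multiset `{k₁,k₂}` encodes
`(min(k₁,k₂), max(k₁,k₂))`. -/
def overlap {d K : ℕ} (g : Fin d → Fin K) (r s : PairIdx d) : Multiset (Fin K) :=
  (({r.1.1, r.1.2} ∩ {s.1.1, s.1.2} : Finset (Fin d)).val.map g)

/-- The cardinality of the block containing `r`. -/
def blockCard {d K : ℕ} (g : Fin d → Fin K) (r : PairIdx d) : ℕ :=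
  (Finset.univ.filter (fun t => sameBlock g r t)).card

/-- The blockwise-averaging matrix `Γ`. -/
noncomputable def Gamma {d K : ℕ} (g : Fin d → Fin K) :
    Matrix (PairIdx d) (PairIdx d) ℝ :=
  Matrix.of fun r s => if sameBlock g r s then (1 : ℝ) / (blockCard g r) else 0

/-- Membership in the class `𝒮_𝒢`. -/
def inSG {d K : ℕ} (g : Fin d → Fin K) (S : Matrix (PairIdx d) (PairIdx d) ℝ) : Prop :=
  S.IsSymm ∧ ∀ r r' s s' : PairIdx d, sameBlock g r r' → sameBlock g s s' →
    overlap g r s = overlap g r' s' → S r s = S r' s'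

section Block

variable {d K : ℕ} {g : Fin d → Fin K}

theorem sameBlock.refl (g : Fin d → Fin K) (r : PairIdx d) : sameBlock g r r :=
  Or.inl ⟨rfl, rfl⟩

theorem sameBlock.symm {r s : PairIdx d} (h : sameBlock g r s) : sameBlock g s r := by
  unfold sameBlock at *; tauto

theorem sameBlock.trans {r s t : PairIdx d} (h₁ : sameBlock g r s) (h₂ : sameBlock g s t) :
    sameBlock g r t := by
  unfold sameBlock at *; grind

theorem sameBlock_comm {r s : PairIdx d} : sameBlock g r s ↔ sameBlock g s r :=
  ⟨.symm, .symm⟩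

def block (g : Fin d → Fin K) (r : PairIdx d) : Finset (PairIdx d) :=
  univ.filter (fun t => sameBlock g r t)

@[simp]
theorem mem_block {r t : PairIdx d} : t ∈ block g r ↔ sameBlock g r t := by
  simp [block]

theorem card_block (g : Fin d → Fin K) (r : PairIdx d) : #(block g r) = blockCard g r := rfl

theorem block_eq_of_sameBlock {r r' : PairIdx d} (h : sameBlock g r r') :
    block g r = block g r' := by
  ext t
  simp only [mem_block]
  exact ⟨h.symm.trans, h.trans⟩

theorem blockCard_eq_of_sameBlock {r r' : PairIdx d} (h : sameBlock g r r') :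
    blockCard g r = blockCard g r' := by
  rw [← card_block, ← card_block, block_eq_of_sameBlock h]

theorem blockCard_pos (g : Fin d → Fin K) (r : PairIdx d) : 0 < blockCard g r :=
  card_pos.mpr ⟨r, mem_block.mpr (.refl g r)⟩

end Block

section Gamma

variable {d K : ℕ} {g : Fin d → Fin K}

theorem Gamma_transpose (g : Fin d → Fin K) : (Gamma g)ᵀ = Gamma g := by
  ext r s
  simp only [Gamma, transpose_apply, of_apply, sameBlock_comm (r := s)]
  split_ifs with h
  · rw [blockCard_eq_of_sameBlock h]
  · rfl

theorem Gamma_mul_apply (S : Matrix (PairIdx d) (PairIdx d) ℝ) (r s : PairIdx d) :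
    (Gamma g * S) r s = (blockCard g r : ℝ)⁻¹ * ∑ t ∈ block g r, S t s := by
  simp only [mul_apply, Gamma, of_apply, ite_mul, zero_mul, ← sum_filter, mul_sum, one_div]
  rfl

theorem mul_Gamma_of_sameBlock {ι : Type*} (M : Matrix ι (PairIdx d) ℝ)
    (hM : ∀ i s t, sameBlock g s t → M i t = M i s) : M * Gamma g = M := by
  ext i s
  have hs : (blockCard g s : ℝ) ≠ 0 := by exact_mod_cast (blockCard_pos g s).ne'
  rw [← Gamma_transpose, mul_apply]
  simp only [transpose_apply, Gamma, of_apply, mul_ite, mul_zero, ← sum_filter]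
  calc ∑ t ∈ block g s, M i t * (1 / (blockCard g s : ℝ))
      = ∑ t ∈ block g s, M i s * (1 / (blockCard g s : ℝ)) :=
        sum_congr rfl fun t ht => by rw [hM i s t (mem_block.mp ht)]
    _ = M i s := by rw [sum_const, card_block, nsmul_eq_mul]; field_simp

end Gamma

theorem comp_swap_eq_self {α β : Type*} [DecidableEq α] {f : α → β} {a b : α} (h : f a = f b) :
    f ∘ Equiv.swap a b = f := by
  rw [Equiv.comp_swap_eq_update, h, Function.update_eq_self, ← h, Function.update_eq_self]

theorem exists_perm_comp_eq_map_pair {α β : Type*} [DecidableEq α] (f : α → β)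
    {a b a' b' : α} (hab : a ≠ b) (hab' : a' ≠ b') (ha : f a = f a') (hb : f b = f b') :
    ∃ σ : Equiv.Perm α, f ∘ σ = f ∧ σ a = a' ∧ σ b = b' := by
  set c := Equiv.swap a a' b
  have hc : f c = f b' := by
    rw [← hb, ← Function.comp_apply (f := f), comp_swap_eq_self ha]
  have hca' : a' ≠ c := by
    rw [← Equiv.swap_apply_left a a']; exact (Equiv.injective _).ne hab
  refine ⟨Equiv.swap c b' * Equiv.swap a a', ?_, ?_, ?_⟩
  · rw [Equiv.Perm.coe_mul, ← Function.comp_assoc, comp_swap_eq_self hc, comp_swap_eq_self ha]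
  · simp only [Equiv.Perm.mul_apply, Equiv.swap_apply_left]
    exact Equiv.swap_apply_of_ne_of_ne hca' hab'
  · exact Equiv.swap_apply_left c b'

section PairAction

variable {d K : ℕ} {g : Fin d → Fin K}

def pairSet (t : PairIdx d) : Finset (Fin d) := {t.1.1, t.1.2}

theorem pairSet_injective : Function.Injective (pairSet (d := d)) := by
  rintro ⟨⟨a, b⟩, hab⟩ ⟨⟨c, e⟩, hce⟩ h
  have h' := congrArg (fun s : Finset (Fin d) => (s : Set (Fin d))) h
  simp only [pairSet, coe_pair, Set.pair_eq_pair_iff] at h'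
  simp only [Subtype.mk.injEq, Prod.mk.injEq]
  rcases h' with h' | ⟨rfl, rfl⟩
  · exact h'
  · exact absurd (hab.trans hce) (lt_irrefl _)

instance : SMul (Equiv.Perm (Fin d)) (PairIdx d) where
  smul σ t := ⟨(min (σ t.1.1) (σ t.1.2), max (σ t.1.1) (σ t.1.2)),
    min_lt_max.mpr (σ.injective.ne t.2.ne)⟩

theorem pairSet_smul (σ : Equiv.Perm (Fin d)) (t : PairIdx d) :
    pairSet (σ • t) = (pairSet t).image σ := by
  change ({min (σ t.1.1) (σ t.1.2), max (σ t.1.1) (σ t.1.2)} : Finset (Fin d)) = _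
  rcases le_total (σ t.1.1) (σ t.1.2) with h | h
  · simp [pairSet, min_eq_left h, max_eq_right h]
  · simp [pairSet, min_eq_right h, max_eq_left h, pair_comm]

instance : MulAction (Equiv.Perm (Fin d)) (PairIdx d) where
  one_smul t := pairSet_injective <| by simp [pairSet_smul]
  mul_smul σ τ t := pairSet_injective <| by simp [pairSet_smul, image_image]

theorem sameBlock_smul_self {σ : Equiv.Perm (Fin d)} (hσ : g ∘ σ = g) (t : PairIdx d) :
    sameBlock g (σ • t) t := by
  have hσ' := congrFun hσ
  change sameBlock g ⟨(min (σ t.1.1) (σ t.1.2), max (σ t.1.1) (σ t.1.2)), _⟩ t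
  rcases le_total (σ t.1.1) (σ t.1.2) with h | h
  · exact Or.inl (by simpa [min_eq_left h, max_eq_right h] using ⟨hσ' _, hσ' _⟩)
  · exact Or.inr (by simpa [min_eq_right h, max_eq_left h] using ⟨hσ' _, hσ' _⟩)

theorem overlap_smul {σ : Equiv.Perm (Fin d)} (hσ : g ∘ σ = g) (r s : PairIdx d) :
    overlap g (σ • r) (σ • s) = overlap g r s := by
  change ((pairSet (σ • r) ∩ pairSet (σ • s)).val.map g) = (pairSet r ∩ pairSet s).val.map g
  rw [pairSet_smul, pairSet_smul, ← image_inter _ _ σ.injective,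
    image_val_of_injOn σ.injective.injOn, Multiset.map_map, hσ]

theorem exists_smul_eq_of_sameBlock {s s' : PairIdx d} (h : sameBlock g s s') :
    ∃ σ : Equiv.Perm (Fin d), g ∘ σ = g ∧ σ • s = s' := by
  have hs := s.2.ne
  have hs' := s'.2.ne
  rcases h with ⟨h₁, h₂⟩ | ⟨h₁, h₂⟩
  · obtain ⟨σ, hσ, h₁, h₂⟩ := exists_perm_comp_eq_map_pair g hs hs' h₁ h₂
    exact ⟨σ, hσ, pairSet_injective <| by
      rw [pairSet_smul]; simp [pairSet, h₁, h₂]⟩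
  · obtain ⟨σ, hσ, h₁, h₂⟩ := exists_perm_comp_eq_map_pair g hs hs'.symm h₁ h₂
    exact ⟨σ, hσ, pairSet_injective <| by
      rw [pairSet_smul]; simp [pairSet, h₁, h₂, pair_comm]⟩

end PairAction

theorem Matrix.mul_comm_of_mul_mul_eq_mul {n R : Type*} [Fintype n] [CommRing R]
    {P S : Matrix n n R} (hP : P.IsSymm) (hS : S.IsSymm) (h : P * S * P = P * S) :
    P * S = S * P :=
  calc P * S = (P * S * P)ᵀ := by
        rw [transpose_mul, transpose_mul, hP.eq, hS.eq, ← Matrix.mul_assoc, h]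
    _ = S * P := by rw [h, transpose_mul, hP.eq, hS.eq]

section Invariance

variable {d K : ℕ} {g : Fin d → Fin K} {S : Matrix (PairIdx d) (PairIdx d) ℝ}

theorem sum_block_eq_of_sameBlock (hS : inSG g S) (r : PairIdx d) {s s' : PairIdx d}
    (h : sameBlock g s s') : ∑ t ∈ block g r, S t s = ∑ t ∈ block g r, S t s' := by
  obtain ⟨σ, hσ, rfl⟩ := exists_smul_eq_of_sameBlock h
  refine sum_equiv (MulAction.toPerm σ) (fun t => ?_) (fun t _ => ?_)
  · simp only [mem_block, MulAction.toPerm_apply]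
    exact ⟨fun ht => ht.trans (sameBlock_smul_self hσ t).symm,
      fun ht => ht.trans (sameBlock_smul_self hσ t)⟩
  · exact hS.2 _ _ _ _ (sameBlock_smul_self hσ t).symm (sameBlock_smul_self hσ s).symm
      (overlap_smul hσ t s).symm

theorem Gamma_mul_apply_eq_of_sameBlock (hS : inSG g S) (r : PairIdx d) {s s' : PairIdx d}
    (h : sameBlock g s s') : (Gamma g * S) r s' = (Gamma g * S) r s := by
  rw [Gamma_mul_apply, Gamma_mul_apply, sum_block_eq_of_sameBlock hS r h]

end Invariance

theorem statement_13_general {d K : ℕ} (g : Fin d → Fin K)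
    (S : Matrix (PairIdx d) (PairIdx d) ℝ) (hS : inSG g S) :
    Gamma g * S = S * Gamma g ∧ Gamma g * S * Gamma g = Gamma g * S := by
  have hfix : Gamma g * S * Gamma g = Gamma g * S :=
    mul_Gamma_of_sameBlock _ fun r _ _ h => Gamma_mul_apply_eq_of_sameBlock hS r h
  have hΓ : (Gamma g).IsSymm := Gamma_transpose g
  exact ⟨mul_comm_of_mul_mul_eq_mul hΓ hS.1 hfix, hfix⟩

/-- For every `S ∈ 𝒮_𝒢`, `Γ S = S Γ` and `Γ S Γ = Γ S`. -/
theorem statement_13 {d K : ℕ} (hd : 2 ≤ d) (hK : 1 ≤ K)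
    (g : Fin d → Fin K) (hg : Function.Surjective g)
    (S : Matrix (PairIdx d) (PairIdx d) ℝ) (hS : inSG g S) :
    Gamma g * S = S * Gamma g ∧ Gamma g * S * Gamma g = Gamma g * S :=
  statement_13_general g S hS
end

section
/- If S, Q ∈ 𝒮_𝒢 and the product S Q is a symmetric matrix, then S Q ∈ 𝒮_𝒢. -/
open Matrix Finset

/-! The label-preserving permutations `σ` of `Fin d` (those with `g ∘ σ = g`) act on pairs, and
every matrix in `𝒮_𝒢` is fixed by reindexing along them. Conversely, if `r, r'` and `s, s'` lie in
the same blocks and `φ̄(r,s) = φ̄(r',s')`, some such `σ` carries `r` to `r'` and `s` to `s'`: match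
the points of `r ∪ s` with those of `r' ∪ s'` label by label, which the equal overlap types allow,
and extend the matching by swaps. Invariance under reindexing passes to products, so `S Q` satisfies
the block conditions, and it is symmetric by hypothesis. -/

section LabelPreserving

variable {α β : Type*} [DecidableEq α] (g : α → β)

lemma apply_swap_eq_of_apply_eq {a b : α} (hab : g a = g b) (i : α) :
    g (Equiv.swap a b i) = g i := by
  rw [Equiv.swap_apply_def]
  split_ifs with ha hb
  · rw [ha, hab]
  · rw [hb, hab]
  · rfl

theorem exists_perm_map_eq_of_forall₂ {xs ys : List α} (hxs : xs.Nodup) (hys : ys.Nodup)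
    (h : List.Forall₂ (fun x y => g x = g y) xs ys) :
    ∃ σ : Equiv.Perm α, (∀ i, g (σ i) = g i) ∧ xs.map σ = ys := by
  induction h with
  | nil => exact ⟨1, fun _ => rfl, rfl⟩
  | @cons x y xs ys hxy _ ih =>
    obtain ⟨hx, hxs⟩ := List.nodup_cons.mp hxs
    obtain ⟨hy, hys⟩ := List.nodup_cons.mp hys
    obtain ⟨σ, hσ, hmap⟩ := ih hxs hys
    -- correct `σ` by a swap that fixes the tail and sends `x` to `σ⁻¹ y`
    set b := σ.symm y
    have hb : σ b = y := σ.apply_symm_apply y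
    refine ⟨(Equiv.swap x b).trans σ, fun i => ?_, ?_⟩
    · rw [Equiv.trans_apply, hσ]
      exact apply_swap_eq_of_apply_eq g (by rw [hxy, ← hb, hσ]) i
    · have hfix : ∀ z ∈ xs, Equiv.swap x b z = z := by
        intro z hz
        refine Equiv.swap_apply_of_ne_of_ne (fun h => hx (h ▸ hz)) fun h => hy ?_
        rw [← hmap, ← hb, ← h]
        exact List.mem_map_of_mem hz
      rw [List.map_cons, Equiv.trans_apply, Equiv.swap_apply_left, hb, ← hmap]
      exact congrArg _ (List.map_congr_left fun z hz => by rw [Equiv.trans_apply, hfix z hz])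

end LabelPreserving

section PairAction

variable {d : ℕ}

def pset (r : PairIdx d) : Finset (Fin d) := {r.1.1, r.1.2}

lemma pset_injective : Function.Injective (pset (d := d)) := by
  rintro ⟨⟨a, b⟩, hab⟩ ⟨⟨c, e⟩, hce⟩ h
  simp only [pset, Finset.ext_iff, Finset.mem_insert, Finset.mem_singleton] at h
  have := h a; have := h b; have := h c
  ext <;> simp only at * <;> grind

lemma card_pset (r : PairIdx d) : (pset r).card = 2 :=
  Finset.card_pair r.2.ne

def permPair (σ : Equiv.Perm (Fin d)) (r : PairIdx d) : PairIdx d :=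
  if h : σ r.1.1 < σ r.1.2 then ⟨(σ r.1.1, σ r.1.2), h⟩
  else ⟨(σ r.1.2, σ r.1.1), lt_of_le_of_ne (not_lt.mp h) (σ.injective.ne r.2.ne')⟩

lemma pset_permPair (σ : Equiv.Perm (Fin d)) (r : PairIdx d) :
    pset (permPair σ r) = (pset r).image σ := by
  unfold permPair
  split <;> simp [pset, Finset.image_insert, Finset.pair_comm]

lemma permPair_eq_of_pset_eq_pair {σ : Equiv.Perm (Fin d)} {r r' : PairIdx d} {x u : Fin d}
    (hr : pset r = {x, u}) (hr' : pset r' = {σ x, σ u}) : permPair σ r = r' :=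
  pset_injective (by rw [pset_permPair, hr, hr', Finset.image_insert, Finset.image_singleton])

lemma permPair_symm_apply (σ : Equiv.Perm (Fin d)) (r : PairIdx d) :
    permPair σ.symm (permPair σ r) = r :=
  pset_injective (by simp [pset_permPair, Finset.image_image])

def permPairEquiv (σ : Equiv.Perm (Fin d)) : Equiv.Perm (PairIdx d) where
  toFun := permPair σ
  invFun := permPair σ.symm
  left_inv := permPair_symm_apply σ
  right_inv r := by simpa using permPair_symm_apply σ.symm r

end PairAction

section Invariance

variable {d K : ℕ} {g : Fin d → Fin K} {σ : Equiv.Perm (Fin d)}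

lemma overlap_eq (g : Fin d → Fin K) (r s : PairIdx d) :
    overlap g r s = (pset r ∩ pset s).val.map g := rfl

lemma sameBlock_permPair (hσ : ∀ i, g (σ i) = g i) (r : PairIdx d) :
    sameBlock g (permPair σ r) r := by
  unfold permPair
  split
  · exact Or.inl ⟨hσ _, hσ _⟩
  · exact Or.inr ⟨hσ _, hσ _⟩

lemma overlap_permPair (hσ : ∀ i, g (σ i) = g i) (r s : PairIdx d) :
    overlap g (permPair σ r) (permPair σ s) = overlap g r s := by
  rw [overlap_eq, overlap_eq, pset_permPair, pset_permPair,
    ← Finset.image_inter _ _ σ.injective,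
    Finset.image_val_of_injOn σ.injective.injOn, Multiset.map_map]
  exact Multiset.map_congr rfl fun x _ => hσ x

lemma inSG.submatrix_permPairEquiv {S : Matrix (PairIdx d) (PairIdx d) ℝ} (hS : inSG g S)
    (hσ : ∀ i, g (σ i) = g i) : S.submatrix (permPairEquiv σ) (permPairEquiv σ) = S :=
  Matrix.ext fun r s => hS.2 _ _ _ _ (sameBlock_permPair hσ r) (sameBlock_permPair hσ s)
    (overlap_permPair hσ r s)

lemma inSG.mul_submatrix_permPairEquiv {S Q : Matrix (PairIdx d) (PairIdx d) ℝ}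
    (hS : inSG g S) (hQ : inSG g Q) (hσ : ∀ i, g (σ i) = g i) :
    (S * Q).submatrix (permPairEquiv σ) (permPairEquiv σ) = S * Q := by
  rw [← Matrix.submatrix_mul_equiv S Q _ (permPairEquiv σ), hS.submatrix_permPairEquiv hσ,
    hQ.submatrix_permPairEquiv hσ]

end Invariance

section Transitivity

variable {d K : ℕ} {g : Fin d → Fin K} {r r' s s' : PairIdx d}

lemma exists_pset_eq_of_sameBlock (h : sameBlock g r r') :
    ∃ a b, pset r' = {a, b} ∧ a ≠ b ∧ g r.1.1 = g a ∧ g r.1.2 = g b := by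
  rcases h with ⟨h1, h2⟩ | ⟨h1, h2⟩
  · exact ⟨r'.1.1, r'.1.2, rfl, r'.2.ne, h1, h2⟩
  · exact ⟨r'.1.2, r'.1.1, Finset.pair_comm _ _, r'.2.ne', h1, h2⟩

lemma exists_pset_eq_of_sameBlock_of_mem (h : sameBlock g r r') {x x' : Fin d}
    (hx : x ∈ pset r) (hx' : x' ∈ pset r') (hg : g x = g x') :
    ∃ u u', pset r = {x, u} ∧ pset r' = {x', u'} ∧ x ≠ u ∧ x' ≠ u' ∧ g u = g u' := by
  obtain ⟨a, b, hr', hab, ha, hb⟩ := exists_pset_eq_of_sameBlock h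
  rw [hr', Finset.mem_insert, Finset.mem_singleton] at hx'
  simp only [pset, Finset.mem_insert, Finset.mem_singleton] at hx
  rcases hx with rfl | rfl <;> rcases hx' with rfl | rfl
  · exact ⟨r.1.2, b, rfl, hr', r.2.ne, hab, hb⟩
  · exact ⟨r.1.2, a, rfl, hr'.trans (Finset.pair_comm _ _), r.2.ne, hab.symm,
      by rw [hb, ← hg, ha]⟩
  · exact ⟨r.1.1, b, Finset.pair_comm _ _, hr', r.2.ne', hab, by rw [ha, ← hg, hb]⟩
  · exact ⟨r.1.1, a, Finset.pair_comm _ _, hr'.trans (Finset.pair_comm _ _), r.2.ne', hab.symm,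
      ha⟩

lemma nodup_of_disjoint {a b c e : Fin d} (hr : pset r = {a, b}) (hs : pset s = {c, e})
    (hab : a ≠ b) (hce : c ≠ e) (hrs : Disjoint (pset r) (pset s)) : [a, b, c, e].Nodup := by
  rw [hr, hs, Finset.disjoint_left] at hrs
  simp only [Finset.mem_insert, Finset.mem_singleton] at hrs
  simp only [List.nodup_cons, List.mem_cons, List.not_mem_nil, List.nodup_nil]
  grind

lemma nodup_of_inter_eq_singleton {x u v : Fin d} (hr : pset r = {x, u}) (hs : pset s = {x, v})
    (hxu : x ≠ u) (hxv : x ≠ v) (hx : pset r ∩ pset s = {x}) : [x, u, v].Nodup := by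
  have huv : u ≠ v := by
    rintro rfl
    have hu : u ∈ pset r ∩ pset s := by simp [hr, hs]
    exact hxu (Finset.mem_singleton.mp (hx ▸ hu)).symm
  simp [hxu, hxv, huv]

lemma exists_perm_of_sameBlock (h : sameBlock g r r') :
    ∃ σ : Equiv.Perm (Fin d), (∀ i, g (σ i) = g i) ∧ permPair σ r = r' := by
  obtain ⟨a, b, hr', hab, ha, hb⟩ := exists_pset_eq_of_sameBlock h
  obtain ⟨σ, hσ, hmap⟩ := exists_perm_map_eq_of_forall₂ g (xs := [r.1.1, r.1.2])
    (ys := [a, b]) (by simp [r.2.ne]) (by simp [hab]) (by simp [ha, hb])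
  simp only [List.map_cons, List.map_nil, List.cons.injEq] at hmap
  exact ⟨σ, hσ, permPair_eq_of_pset_eq_pair rfl (by rw [hr', hmap.1, hmap.2.1])⟩

lemma exists_perm_of_disjoint (hrr' : sameBlock g r r') (hss' : sameBlock g s s')
    (hrs : Disjoint (pset r) (pset s)) (hrs' : Disjoint (pset r') (pset s')) :
    ∃ σ : Equiv.Perm (Fin d), (∀ i, g (σ i) = g i) ∧ permPair σ r = r' ∧ permPair σ s = s' := by
  obtain ⟨a, b, hr', hab, ha, hb⟩ := exists_pset_eq_of_sameBlock hrr'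
  obtain ⟨c, e, hs', hce, hc, he⟩ := exists_pset_eq_of_sameBlock hss'
  obtain ⟨σ, hσ, hmap⟩ := exists_perm_map_eq_of_forall₂ g
    (xs := [r.1.1, r.1.2, s.1.1, s.1.2]) (ys := [a, b, c, e])
    (nodup_of_disjoint rfl rfl r.2.ne s.2.ne hrs) (nodup_of_disjoint hr' hs' hab hce hrs')
    (by simp [ha, hb, hc, he])
  simp only [List.map_cons, List.map_nil, List.cons.injEq] at hmap
  obtain ⟨h1, h2, h3, h4, -⟩ := hmap
  exact ⟨σ, hσ, permPair_eq_of_pset_eq_pair rfl (by rw [hr', h1, h2]),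
    permPair_eq_of_pset_eq_pair rfl (by rw [hs', h3, h4])⟩

lemma exists_perm_of_inter_eq_singleton (hrr' : sameBlock g r r') (hss' : sameBlock g s s')
    {x x' : Fin d} (hx : pset r ∩ pset s = {x}) (hx' : pset r' ∩ pset s' = {x'})
    (hg : g x = g x') :
    ∃ σ : Equiv.Perm (Fin d), (∀ i, g (σ i) = g i) ∧ permPair σ r = r' ∧ permPair σ s = s' := by
  have hmem := Finset.mem_inter.mp (hx ▸ Finset.mem_singleton_self x)
  have hmem' := Finset.mem_inter.mp (hx' ▸ Finset.mem_singleton_self x')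
  obtain ⟨u, u', hr, hr', hxu, hxu', hu⟩ :=
    exists_pset_eq_of_sameBlock_of_mem hrr' hmem.1 hmem'.1 hg
  obtain ⟨v, v', hs, hs', hxv, hxv', hv⟩ :=
    exists_pset_eq_of_sameBlock_of_mem hss' hmem.2 hmem'.2 hg
  obtain ⟨σ, hσ, hmap⟩ := exists_perm_map_eq_of_forall₂ g (xs := [x, u, v])
    (ys := [x', u', v'])
    (nodup_of_inter_eq_singleton hr hs hxu hxv hx)
    (nodup_of_inter_eq_singleton hr' hs' hxu' hxv' hx') (by simp [hg, hu, hv])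
  simp only [List.map_cons, List.map_nil, List.cons.injEq] at hmap
  obtain ⟨h1, h2, h3, -⟩ := hmap
  exact ⟨σ, hσ, permPair_eq_of_pset_eq_pair hr (by rw [hr', h1, h2]),
    permPair_eq_of_pset_eq_pair hs (by rw [hs', h1, h3])⟩

lemma eq_of_card_pset_inter_eq_two (h : (pset r ∩ pset s).card = 2) : r = s := by
  have hr := Finset.eq_of_subset_of_card_le Finset.inter_subset_left (h.symm ▸ (card_pset r).le)
  have hs := Finset.eq_of_subset_of_card_le Finset.inter_subset_right (h.symm ▸ (card_pset s).le)
  exact pset_injective (hr.symm.trans hs)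

theorem exists_perm_of_sameBlock_of_overlap_eq (hrr' : sameBlock g r r')
    (hss' : sameBlock g s s') (hov : overlap g r s = overlap g r' s') :
    ∃ σ : Equiv.Perm (Fin d), (∀ i, g (σ i) = g i) ∧ permPair σ r = r' ∧ permPair σ s = s' := by
  have hcard : (pset r ∩ pset s).card = (pset r' ∩ pset s').card := by
    have h := congrArg Multiset.card hov
    rwa [overlap_eq, overlap_eq, Multiset.card_map, Multiset.card_map] at h
  have hle : (pset r ∩ pset s).card ≤ 2 :=
    card_pset r ▸ Finset.card_le_card Finset.inter_subset_left
  interval_cases h : (pset r ∩ pset s).card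
  · exact exists_perm_of_disjoint hrr' hss' (Finset.disjoint_iff_inter_eq_empty.mpr
      (Finset.card_eq_zero.mp h)) (Finset.disjoint_iff_inter_eq_empty.mpr
      (Finset.card_eq_zero.mp hcard.symm))
  · obtain ⟨x, hx⟩ := Finset.card_eq_one.mp h
    obtain ⟨x', hx'⟩ := Finset.card_eq_one.mp hcard.symm
    rw [overlap_eq, overlap_eq, hx, hx'] at hov
    exact exists_perm_of_inter_eq_singleton hrr' hss' hx hx' (by simpa using hov)
  · obtain rfl := eq_of_card_pset_inter_eq_two h
    obtain rfl := eq_of_card_pset_inter_eq_two hcard.symm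
    obtain ⟨σ, hσ, hr⟩ := exists_perm_of_sameBlock hrr'
    exact ⟨σ, hσ, hr, hr⟩

end Transitivity

theorem statement_14_general {d K : ℕ}
    (g : Fin d → Fin K)
    (S Q : Matrix (PairIdx d) (PairIdx d) ℝ)
    (hS : inSG g S) (hQ : inSG g Q) (hSQ : (S * Q).IsSymm) :
    inSG g (S * Q) := by
  refine ⟨hSQ, fun r r' s s' hrr' hss' hov => ?_⟩
  obtain ⟨σ, hσ, rfl, rfl⟩ := exists_perm_of_sameBlock_of_overlap_eq hrr' hss' hov
  exact (congrFun₂ (hS.mul_submatrix_permPairEquiv hQ hσ) r s).symm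

/-- If `S, Q ∈ 𝒮_𝒢` and the product `S Q` is symmetric, then
`S Q ∈ 𝒮_𝒢`. -/
theorem statement_14 {d K : ℕ} (hd : 2 ≤ d) (hK : 1 ≤ K)
    (g : Fin d → Fin K) (hg : Function.Surjective g)
    (S Q : Matrix (PairIdx d) (PairIdx d) ℝ)
    (hS : inSG g S) (hQ : inSG g Q) (hSQ : (S * Q).IsSymm) :
    inSG g (S * Q) :=
  statement_14_general g S Q hS hQ hSQ
end
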